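/- Let G be a finite group of conjugate type (p, 1), i.e., [G : C(x)] = p for all non-central x, with [G : Z(G)] = p^k. Then the number of distinct element centralizers of G equals (p^k − 1)/(p − 1) + 1, and this also equals the number of z-classes of G. -/

import Mathlib

/-!
Every centralizer contains `Z(G)`, so a centralizer of index `p` gives a subgroup of index `p`
of the `p`-group `G ⧸ Z(G)`, which is normal. Hence all centralizers are normal, each is its only
conjugate, and `z`-classes correspond to centralizers.

Since all proper centralizers have the same index, `G` is an F-group: for non-central `x`, the
non-central `y` with `C(y) = C(x)` are exactly the non-central elements of `Z(C(x))`. By Mann's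
argument `[Z(C(x)) : Z(G)] = p`: for `g ∉ C(x)` one has `C(g) ∩ Z(C(x)) = Z(G)`, so this index is
at most `[G : C(g)] = p`, and it is a nontrivial divisor of `p ^ k`. Counting `G` fibre by fibre
over its centralizers gives `p ^ k |Z| = |Z| + (N - 1)(p - 1)|Z|`, where `N` is their number.
-/

/-- The set of element centralizers of `G`. -/
def cent (G : Type*) [Group G] : Set (Subgroup G) :=
  Set.range fun x : G => Subgroup.centralizer {x}

/-- The number of distinct element centralizers of `G`. -/
noncomputable def numCent (G : Type*) [Group G] : ℕ := (cent G).ncard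

/-- The center of the centralizer `C(x)`, viewed as a subgroup of `G`. -/
def centerCentralizer {G : Type*} [Group G] (x : G) : Subgroup G :=
  Subgroup.centralizer {x} ⊓
    Subgroup.centralizer ((Subgroup.centralizer {x} : Subgroup G) : Set G)

/-- `G` is an F-group: for non-central `x, y`, `C(x) ≤ C(y)` implies `C(x) = C(y)`. -/
def IsFGroup (G : Type*) [Group G] : Prop :=
  ∀ x y : G, x ∉ Subgroup.center G → y ∉ Subgroup.center G →
    Subgroup.centralizer {x} ≤ Subgroup.centralizer {y} →
    Subgroup.centralizer ({x} : Set G) = Subgroup.centralizer {y}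

/-- The set of conjugates of a subgroup `H` of `G`. -/
def conjugates {G : Type*} [Group G] (H : Subgroup G) : Set (Subgroup G) :=
  {K | ∃ g : G, K = Subgroup.map (MulAut.conj g).toMonoidHom H}

/-- The number of `z`-classes of `G`: elements are `z`-equivalent when their
centralizers are conjugate in `G`, so the number of `z`-classes is the number of
distinct conjugacy classes of element centralizers. -/
noncomputable def numZClasses (G : Type*) [Group G] : ℕ :=
  (Set.range fun x : G => conjugates (Subgroup.centralizer {x})).ncard

open Subgroup

lemma Nat.eq_of_dvd_prime_pow_of_le {p k d : ℕ} (hp : p.Prime) (hd : d ∣ p ^ k) (hle : d ≤ p)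
    (hne : d ≠ 1) : d = p := by
  obtain ⟨j, -, rfl⟩ := (Nat.dvd_prime_pow hp).1 hd
  have hj : j ≠ 0 := by rintro rfl; exact hne (pow_zero p)
  exact le_antisymm hle (Nat.le_self_pow hj p)

namespace Subgroup

variable {G : Type*} [Group G]

lemma normal_of_le_of_index_eq_prime {N H : Subgroup G} [N.Normal] {p k : ℕ} (hp : p.Prime)
    (hN : N.index = p ^ k) (hNH : N ≤ H) (hH : H.index = p) : H.Normal := by
  have hk : k ≠ 0 := by
    rintro rfl
    have hdvd := index_dvd_of_le hNH
    rw [hH, hN, pow_zero] at hdvd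
    exact hp.ne_one (Nat.dvd_one.1 hdvd)
  have hker : (QuotientGroup.mk' N).ker ≤ H := by rwa [QuotientGroup.ker_mk']
  have hmap : (H.map (QuotientGroup.mk' N)).Normal := by
    apply normal_of_index_eq_minFac_card
    rw [index_map_eq _ (QuotientGroup.mk'_surjective N) hker, ← index_eq_card, hN,
      hp.pow_minFac hk, hH]
  rw [← comap_map_eq_self hker]
  exact hmap.comap _

lemma centralizer_singleton_eq_top_iff {x : G} : centralizer {x} = ⊤ ↔ x ∈ center G := by
  rw [centralizer_eq_top_iff_subset, Set.singleton_subset_iff, SetLike.mem_coe]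

end Subgroup

section

variable {G : Type*} [Group G]

lemma mem_centerCentralizer_iff {x y : G} :
    y ∈ centerCentralizer x ↔ centralizer {x} ≤ centralizer {y} := by
  refine ⟨fun hy c hc => mem_centralizer_singleton_iff.2 (hy.2 c hc), fun hle => ⟨?_, ?_⟩⟩
  · have hxy : x * y = y * x :=
      mem_centralizer_singleton_iff.1 (hle (mem_centralizer_singleton_iff.2 rfl))
    exact mem_centralizer_singleton_iff.2 hxy.symm
  · exact fun c hc => mem_centralizer_singleton_iff.1 (hle hc)

lemma center_le_centerCentralizer (x : G) : center G ≤ centerCentralizer x := fun _ hy =>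
  mem_centerCentralizer_iff.2 ((centralizer_singleton_eq_top_iff.2 hy).symm ▸ le_top)

lemma mem_centerCentralizer_self (x : G) : x ∈ centerCentralizer x :=
  mem_centerCentralizer_iff.2 le_rfl

lemma isFGroup_of_index_centralizer_eq [Finite G] {n : ℕ}
    (h : ∀ x : G, x ∉ center G → (centralizer {x}).index = n) : IsFGroup G := by
  intro x y hx hy hle
  refine eq_of_le_of_not_lt hle fun hlt => ?_
  have hidx := index_strictAnti hlt
  rw [h x hx, h y hy] at hidx
  exact lt_irrefl n hidx

lemma IsFGroup.setOf_centralizer_eq (hG : IsFGroup G) {x : G} (hx : x ∉ center G) :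
    {y : G | centralizer {y} = centralizer {x}} = (centerCentralizer x : Set G) \ center G := by
  ext y
  simp only [Set.mem_ofPred_eq, Set.mem_sdiff, SetLike.mem_coe, mem_centerCentralizer_iff,
    ← centralizer_singleton_eq_top_iff]
  refine ⟨fun hyx => ⟨hyx.ge, hyx ▸ mt centralizer_singleton_eq_top_iff.1 hx⟩,
    fun ⟨hle, hy⟩ => (hG x y hx (mt centralizer_singleton_eq_top_iff.2 hy) hle).symm⟩

lemma relIndex_center_centerCentralizer [Finite G] {p k : ℕ} (hp : p.Prime)
    (h : ∀ x : G, x ∉ center G → (centralizer {x}).index = p) (hk : (center G).index = p ^ k)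
    {x : G} (hx : x ∉ center G) :
    (center G).relIndex (centerCentralizer x) = p := by
  obtain ⟨g, hg⟩ : ∃ g, g ∉ centralizer {x} := by
    by_contra! hall
    exact hx (centralizer_singleton_eq_top_iff.1 ((eq_top_iff' _).2 hall))
  have hgZ : g ∉ center G := fun hgZ => hg (center_le_centralizer _ hgZ)
  have hinf : centralizer {g} ⊓ centerCentralizer x = center G := by
    refine le_antisymm (fun y ⟨hgy, hy⟩ => ?_) (le_inf (center_le_centralizer _)
      (center_le_centerCentralizer x))
    by_contra hyZ
    have hyx : y ∈ {y : G | centralizer {y} = centralizer {x}} := by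
      rw [(isFGroup_of_index_centralizer_eq h).setOf_centralizer_eq hx]
      exact ⟨hy, hyZ⟩
    exact hg (hyx ▸ mem_centralizer_singleton_iff.2 (mem_centralizer_singleton_iff.1 hgy).symm)
  have hle : (center G).relIndex (centerCentralizer x) ≤ p := calc
    (center G).relIndex (centerCentralizer x)
      = (centralizer {g}).relIndex (centerCentralizer x) := by rw [← hinf, inf_relIndex_right]
    _ ≤ (centralizer {g}).relIndex ⊤ :=
      relIndex_le_of_le_right le_top (by rw [relIndex_top_right]; exact index_ne_zero_of_finite)
    _ = p := by rw [relIndex_top_right, h g hgZ]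
  have hdvd : (center G).relIndex (centerCentralizer x) ∣ p ^ k :=
    hk ▸ relIndex_dvd_index_of_le (center_le_centerCentralizer x)
  exact Nat.eq_of_dvd_prime_pow_of_le hp hdvd hle fun h1 =>
    hx (relIndex_eq_one.1 h1 (mem_centerCentralizer_self x))

lemma ncard_coe_subgroup (H : Subgroup G) : (H : Set G).ncard = Nat.card H := by
  rw [← Nat.card_coe_set_eq, SetLike.coe_sort_coe]

lemma ncard_setOf_centralizer_eq [Finite G] {p k : ℕ} (hp : p.Prime)
    (h : ∀ x : G, x ∉ center G → (centralizer {x}).index = p) (hk : (center G).index = p ^ k)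
    {x : G} (hx : x ∉ center G) :
    {y : G | centralizer {y} = centralizer {x}}.ncard = (p - 1) * Nat.card (center G) := by
  have hZK := center_le_centerCentralizer x
  have hcard : Nat.card (centerCentralizer x) = p * Nat.card (center G) := by
    rw [← relIndex_bot_left, ← relIndex_mul_relIndex ⊥ _ _ bot_le hZK, relIndex_bot_left,
      relIndex_center_centerCentralizer hp h hk hx, mul_comm]
  have hsplit := Set.ncard_sdiff_add_ncard_of_subset (SetLike.coe_subset_coe.2 hZK)
  rw [ncard_coe_subgroup, ncard_coe_subgroup, hcard] at hsplit
  rw [(isFGroup_of_index_centralizer_eq h).setOf_centralizer_eq hx, Nat.sub_one_mul]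
  omega

lemma card_eq_card_center_add_ncard_mul [Finite G] {m : ℕ}
    (hfib : ∀ x : G, x ∉ center G → {y : G | centralizer {y} = centralizer {x}}.ncard = m) :
    Nat.card G = Nat.card (center G) + (cent G \ {⊤}).ncard * m := by
  classical
  have := Fintype.ofFinite G
  let f : G → Subgroup G := fun x => centralizer {x}
  have hfiber (C : Subgroup G) : (Finset.univ.filter (f · = C)).card = {y | f y = C}.ncard := by
    rw [← Set.ncard_coe_finset, Finset.coe_filter]
    simp
  have hcent : cent G = ↑(Finset.univ.image f) := by
    rw [Finset.coe_image, Finset.coe_univ, Set.image_univ]; rfl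
  have htop : ⊤ ∈ Finset.univ.image f :=
    Finset.mem_image.2 ⟨1, Finset.mem_univ _, centralizer_singleton_eq_top_iff.2 (one_mem _)⟩
  rw [Nat.card_eq_fintype_card, ← Finset.card_univ, Finset.card_eq_sum_card_image f,
    ← Finset.add_sum_erase _ _ htop, hcent, ← Finset.coe_erase, Set.ncard_coe_finset]
  congr 1
  · rw [hfiber, ← ncard_coe_subgroup]
    congr 1
    ext y
    exact centralizer_singleton_eq_top_iff
  · refine Finset.sum_const_nat fun C hC => ?_
    obtain ⟨hCtop, hCf⟩ := Finset.mem_erase.1 hC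
    obtain ⟨x, -, rfl⟩ := Finset.mem_image.1 hCf
    rw [hfiber]
    exact hfib x (mt centralizer_singleton_eq_top_iff.2 hCtop)

lemma centralizer_normal_of_index_eq_prime {p k : ℕ} (hp : p.Prime)
    (h : ∀ x : G, x ∉ center G → (centralizer {x}).index = p) (hk : (center G).index = p ^ k)
    (x : G) : (centralizer {x}).Normal := by
  by_cases hx : x ∈ center G
  · rw [centralizer_singleton_eq_top_iff.2 hx]
    infer_instance
  · exact normal_of_le_of_index_eq_prime hp hk (center_le_centralizer _) (h x hx)

lemma conjugates_eq_singleton (H : Subgroup G) [H.Normal] : conjugates H = {H} := by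
  ext K
  refine ⟨fun ⟨g, hK⟩ => hK.trans (Normal.map_conj_eq H g), fun hK => ⟨1, ?_⟩⟩
  rw [Set.mem_singleton_iff.1 hK]
  exact (Normal.map_conj_eq H 1).symm

lemma numZClasses_eq_numCent (hG : ∀ x : G, (centralizer {x}).Normal) :
    numZClasses G = numCent G := by
  have hconj : (fun x : G => conjugates (centralizer {x})) =
      Set.singleton ∘ fun x => centralizer {x} :=
    funext fun x => have := hG x; conjugates_eq_singleton _
  rw [numZClasses, numCent, cent, hconj, Set.range_comp]
  exact Set.ncard_image_of_injective _ Set.singleton_injective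

end

theorem stmt9 (G : Type*) [Group G] [Finite G] (p k : ℕ) (hp : p.Prime)
    (h : ∀ x : G, x ∉ Subgroup.center G → (Subgroup.centralizer {x}).index = p)
    (hk : (Subgroup.center G).index = p ^ k) :
    numCent G = (p ^ k - 1) / (p - 1) + 1 ∧
      numZClasses G = (p ^ k - 1) / (p - 1) + 1 := by
  have hcount := card_eq_card_center_add_ncard_mul fun _ => ncard_setOf_centralizer_eq hp h hk
  rw [← index_mul_card (center G), hk] at hcount
  have hpk : p ^ k - 1 = (cent G \ {⊤}).ncard * (p - 1) := by
    rw [← Nat.mul_right_cancel_iff (Nat.card_pos (α := center G)), Nat.sub_one_mul, mul_assoc]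
    omega
  have hnum : numCent G = (p ^ k - 1) / (p - 1) + 1 := by
    rw [hpk, Nat.mul_div_cancel _ (Nat.sub_pos_of_lt hp.one_lt), numCent,
      Set.ncard_sdiff_singleton_add_one (s := cent G)
        ⟨1, centralizer_singleton_eq_top_iff.2 (one_mem _)⟩]
  exact ⟨hnum, numZClasses_eq_numCent (centralizer_normal_of_index_eq_prime hp h hk) ▸ hnum⟩
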